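/- Let n ≥ 1, let h_1 > h_2 > ... > h_{2n} be integers, and let v_1 ≥ v_2 ≥ ... ≥ v_{2n} be real numbers satisfying the pairing condition and the Newton-above-Hodge condition. If I ⊆ {1,...,2n} is a non-critical slope subset of cardinality n, then I is of Shalika type, i.e. for every 1 ≤ i ≤ n the set I contains exactly one element of the pair {i, 2n+1−i}. -/

import Mathlib

open Finset

/-!
If `I` is not of Shalika type, a counting argument yields two elements `x < y` of `I` with
either `y ≤ n + 1`, or `x < n` and `y ≤ n + 2`. Since `v` decreases, the pairing condition at `n`
(resp. `n - 1`) together with the strict decrease of `h` gives `v x + v y > h n + h (n + 2)`.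
The other `n - 2` elements of `I` contribute at least `∑_{j ≥ n + 3} v j`, which by
Newton-above-Hodge is at least `∑_{j ≥ n + 3} h j`. Adding up contradicts the non-critical slope
bound `∑_{i ∈ I} v i < h n + ∑_{j ≥ n + 2} h j`.
-/

theorem sum_le_sum_of_card_eq_of_sdiff_le {ι M : Type*} [DecidableEq ι] [AddCommMonoid M]
    [Preorder M] [AddLeftMono M] {K L : Finset ι} {f : ι → M} (c : M) (hcard : #K = #L)
    (hK : ∀ i ∈ K \ L, c ≤ f i) (hL : ∀ i ∈ L \ K, f i ≤ c) :
    ∑ i ∈ L, f i ≤ ∑ i ∈ K, f i := by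
  rw [← sum_inter_add_sum_sdiff L K, ← sum_inter_add_sum_sdiff K L, inter_comm]
  refine add_le_add_right ?_ _
  calc ∑ i ∈ L \ K, f i ≤ #(L \ K) • c := sum_le_card_nsmul _ _ _ hL
    _ = #(K \ L) • c := by rw [card_sdiff_comm hcard]
    _ ≤ ∑ i ∈ K \ L, f i := card_nsmul_le_sum _ _ _ hK

theorem antitoneOn_Icc_of_succ_le {α : Type*} [Preorder α] {f : ℕ → α} {a b : ℕ}
    (hf : ∀ i, a ≤ i → i < b → f (i + 1) ≤ f i) : AntitoneOn f (Set.Icc a b) :=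
  antitoneOn_of_succ_le Set.ordConnected_Icc fun i _ hi hsucc ↦
    hf i hi.1 (Order.succ_le_iff.mp hsucc.2)

theorem AntitoneOn.sum_Icc_le_sum {M : Type*} [AddCommMonoid M] [Preorder M] [AddLeftMono M]
    {f : ℕ → M} {a N : ℕ} {K : Finset ℕ} (hf : AntitoneOn f (Set.Icc a N)) (hK : K ⊆ Icc a N) :
    ∑ j ∈ Icc (N + 1 - #K) N, f j ≤ ∑ j ∈ K, f j := by
  rcases K.eq_empty_or_nonempty with rfl | hne
  · simp
  have hcardK : #K ≤ N + 1 - a := by simpa using card_le_card hK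
  have hK0 := hne.card_pos
  refine sum_le_sum_of_card_eq_of_sdiff_le (f (N + 1 - #K)) (by simp; omega) ?_ ?_
  · intro j hj
    obtain ⟨hjK, hjL⟩ := mem_sdiff.mp hj
    have := mem_Icc.mp (hK hjK)
    rw [mem_Icc] at hjL
    exact hf ⟨this.1, by omega⟩ ⟨by omega, by omega⟩ (by omega)
  · intro j hj
    have := mem_Icc.mp (mem_sdiff.mp hj).1
    exact hf ⟨by omega, by omega⟩ ⟨by omega, this.2⟩ this.1

theorem sum_Icc_one_reflect {M : Type*} [AddCommMonoid M] (f : ℕ → M) {N j : ℕ} (hj : j ≤ N) :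
    ∑ i ∈ Icc 1 j, f (N + 1 - i) = ∑ k ∈ Icc (N + 1 - j) N, f k := by
  refine sum_nbij' (fun i ↦ N + 1 - i) (fun k ↦ N + 1 - k) ?_ ?_ ?_ ?_ (fun _ _ ↦ rfl) <;>
    intro a ha <;> simp only [mem_Icc] at ha ⊢ <;> omega

theorem sum_Icc_le_sum_Icc_of_forall_sum_reflect_le {M : Type*} [AddCommMonoid M] [Preorder M]
    {f g : ℕ → M} {N m : ℕ}
    (hfg : ∀ j, 1 ≤ j → j ≤ N → ∑ i ∈ Icc 1 j, f (N + 1 - i) ≤ ∑ i ∈ Icc 1 j, g (N + 1 - i))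
    (hm : m ≤ N) : ∑ k ∈ Icc (N + 1 - m) N, f k ≤ ∑ k ∈ Icc (N + 1 - m) N, g k := by
  rcases Nat.eq_zero_or_pos m with rfl | hm0
  · simp
  · simpa only [sum_Icc_one_reflect _ hm] using hfg m hm0 hm

theorem exists_lt_of_mem_iff_mem {n i : ℕ} {I : Finset ℕ} (hI : I ⊆ Icc 1 (2 * n))
    (hcard : #I = n) (hi1 : 1 ≤ i) (hin : i ≤ n) (hpair : i ∈ I ↔ 2 * n + 1 - i ∈ I) :
    ∃ x ∈ I, ∃ y ∈ I, x < y ∧ (y ≤ n + 1 ∨ x < n ∧ y ≤ n + 2) := by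
  -- Otherwise `I = {x} ∪ [n + 2, 2n]` with `x ∈ {n, n + 1}`, and every pair meets `I` once.
  by_contra! hfew
  have hbound : ∀ x ∈ I, 1 ≤ x ∧ x ≤ 2 * n := fun x hx ↦ mem_Icc.mp (hI hx)
  have hlow_eq : ∀ x ∈ I, ∀ y ∈ I, x ≤ n + 1 → y ≤ n + 1 → x = y := by
    intro x hx y hy hxn hyn
    by_contra hne
    rcases Nat.lt_or_gt_of_ne hne with hxy | hyx
    · exact absurd (hfew x hx y hy hxy).1 (by omega)
    · exact absurd (hfew y hy x hx hyx).1 (by omega)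
  obtain ⟨x, hxI, hx⟩ : ∃ x ∈ I, x ∉ Icc (n + 2) (2 * n) :=
    exists_mem_notMem_of_card_lt_card (by rw [Nat.card_Icc]; omega)
  have hxn1 : x ≤ n + 1 := by have := hbound x hxI; rw [mem_Icc] at hx; omega
  have hhigh : Icc (n + 2) (2 * n) ⊆ I := by
    have hsub : I.erase x ⊆ Icc (n + 2) (2 * n) := by
      intro y hy
      obtain ⟨hyx, hyI⟩ := mem_erase.mp hy
      have := hbound y hyI
      have : ¬ y ≤ n + 1 := fun hyn ↦ hyx (hlow_eq y hyI x hxI hyn hxn1)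
      rw [mem_Icc]; omega
    rw [← eq_of_subset_of_card_le hsub (by rw [card_erase_of_mem hxI, Nat.card_Icc]; omega)]
    exact erase_subset x I
  have hnx : n ≤ x := by
    by_contra! hxn
    have := hbound x hxI
    have := (hfew x hxI (n + 2) (hhigh (by rw [mem_Icc]; omega)) (by omega)).2 hxn
    omega
  rcases hin.lt_or_eq with hin | rfl
  · have hiI : i ∈ I := hpair.mpr (hhigh (by rw [mem_Icc]; omega))
    have := hlow_eq i hiI x hxI (by omega) hxn1
    omega
  · rw [show 2 * i + 1 - i = i + 1 by omega] at hpair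
    rcases (show x = i ∨ x = i + 1 by omega) with rfl | rfl
    · have := hlow_eq _ (hpair.mp hxI) _ hxI le_rfl hxn1; omega
    · have := hlow_eq _ (hpair.mpr hxI) _ hxI (by omega) le_rfl; omega

theorem hodge_add_hodge_lt_add_of_lt {n x y : ℕ} {h : ℕ → ℤ} {v : ℕ → ℝ}
    (hdec : ∀ i, 1 ≤ i → i < 2 * n → h (i + 1) < h i)
    (hv : AntitoneOn v (Set.Icc 1 (2 * n)))
    (pairing : ∀ i, 1 ≤ i → i ≤ n →
      v i + v (2 * n + 1 - i) = (h i : ℝ) + (h (2 * n + 1 - i) : ℝ))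
    (hn : 2 ≤ n) (hx : 1 ≤ x) (hxy : x < y)
    (hlow : y ≤ n + 1 ∨ x < n ∧ y ≤ n + 2) :
    (h n : ℝ) + h (n + 2) < v x + v y := by
  have hv' : ∀ a b, 1 ≤ a → a ≤ b → b ≤ 2 * n → v b ≤ v a :=
    fun a b ha hab hb ↦ hv ⟨ha, by omega⟩ ⟨by omega, hb⟩ hab
  rcases hlow with hyn | ⟨hxn, hyn⟩
  · have hpair := pairing n (by omega) le_rfl
    rw [show 2 * n + 1 - n = n + 1 by omega] at hpair
    have hh : (h (n + 2) : ℝ) < h (n + 1) := by exact_mod_cast hdec (n + 1) (by omega) (by omega)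
    linarith [hv' x n hx (by omega) (by omega), hv' y (n + 1) (by omega) hyn (by omega)]
  · have hpair := pairing (n - 1) (by omega) (by omega)
    rw [show 2 * n + 1 - (n - 1) = n + 2 by omega] at hpair
    have hh : (h n : ℝ) < h (n - 1) := by
      exact_mod_cast (show n - 1 + 1 = n by omega) ▸ hdec (n - 1) (by omega) (by omega)
    linarith [hv' x (n - 1) hx (by omega) (by omega), hv' y (n + 2) (by omega) hyn (by omega)]

theorem add_add_sum_Icc_le_sum_of_ne {n x y : ℕ} {v : ℕ → ℝ} {I : Finset ℕ}
    (hv : AntitoneOn v (Set.Icc 1 (2 * n))) (hI : I ⊆ Icc 1 (2 * n)) (hcard : #I = n)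
    (hx : x ∈ I) (hy : y ∈ I) (hxy : x ≠ y) :
    v x + v y + ∑ j ∈ Icc (n + 3) (2 * n), v j ≤ ∑ j ∈ I, v j := by
  have hxy_sub : {x, y} ⊆ I := insert_subset hx (singleton_subset_iff.mpr hy)
  have hn : 2 ≤ n := hcard ▸ one_lt_card.mpr ⟨x, hx, y, hy, hxy⟩
  have hrest := hv.sum_Icc_le_sum ((sdiff_subset (t := {x, y})).trans hI)
  rw [card_sdiff_of_subset hxy_sub, card_pair hxy, hcard,
    show 2 * n + 1 - (n - 2) = n + 3 by omega] at hrest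
  rw [← sum_sdiff hxy_sub, sum_pair hxy]
  linarith

theorem non_critical_slope_is_shalika_type_general
    (n : ℕ) (h : ℕ → ℤ) (v : ℕ → ℝ)
    (hdec : ∀ i, 1 ≤ i → i < 2 * n → h (i + 1) < h i)
    (vdec : ∀ i, 1 ≤ i → i < 2 * n → v (i + 1) ≤ v i)
    (pairing : ∀ i, 1 ≤ i → i ≤ n →
      v i + v (2 * n + 1 - i) = (h i : ℝ) + (h (2 * n + 1 - i) : ℝ))
    (newton_above_hodge : ∀ j, 1 ≤ j → j ≤ 2 * n →
      ∑ i ∈ Icc 1 j, (h (2 * n + 1 - i) : ℝ) ≤ ∑ i ∈ Icc 1 j, v (2 * n + 1 - i))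
    (I : Finset ℕ) (hI : I ⊆ Icc 1 (2 * n)) (hcard : I.card = n)
    (hncs : ∑ i ∈ I, v i - ∑ i ∈ Icc (n + 1) (2 * n), (h i : ℝ)
      < (h n : ℝ) - (h (n + 1) : ℝ)) :
    ∀ i, 1 ≤ i → i ≤ n →
      ((i ∈ I ∧ 2 * n + 1 - i ∉ I) ∨ (i ∉ I ∧ 2 * n + 1 - i ∈ I)) := by
  intro i hi1 hin
  by_contra hshalika
  obtain ⟨x, hx, y, hy, hxy, hlow⟩ := exists_lt_of_mem_iff_mem hI hcard hi1 hin (by tauto)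
  have hn : 2 ≤ n := hcard ▸ one_lt_card.mpr ⟨x, hx, y, hy, hxy.ne⟩
  have hv : AntitoneOn v (Set.Icc 1 (2 * n)) := antitoneOn_Icc_of_succ_le vdec
  have hsum := add_add_sum_Icc_le_sum_of_ne hv hI hcard hx hy hxy.ne
  have htail : ∑ j ∈ Icc (n + 3) (2 * n), (h j : ℝ) ≤ ∑ j ∈ Icc (n + 3) (2 * n), v j := by
    have hreflect := sum_Icc_le_sum_Icc_of_forall_sum_reflect_le (f := fun j ↦ (h j : ℝ))
      newton_above_hodge (m := n - 2) (by omega)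
    rwa [show 2 * n + 1 - (n - 2) = n + 3 by omega] at hreflect
  have hlow_sum := hodge_add_hodge_lt_add_of_lt hdec hv pairing hn
    (mem_Icc.mp (hI hx)).1 hxy hlow
  have hh_split : ∑ j ∈ Icc (n + 1) (2 * n), (h j : ℝ)
      = h (n + 1) + (h (n + 2) + ∑ j ∈ Icc (n + 3) (2 * n), (h j : ℝ)) := by
    rw [← insert_Icc_add_one_left_eq_Icc (by omega : n + 1 ≤ 2 * n), sum_insert (by simp),
      ← insert_Icc_add_one_left_eq_Icc (by omega : n + 1 + 1 ≤ 2 * n), sum_insert (by simp)]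
    rfl
  linarith

/-- Let `n ≥ 1`, let `h 1 > h 2 > ... > h (2n)` be integers and
`v 1 ≥ v 2 ≥ ... ≥ v (2n)` real numbers satisfying the pairing condition and the
Newton-above-Hodge condition.  If `I ⊆ {1, ..., 2n}` is a non-critical slope subset of
cardinality `n`, then `I` is of Shalika type: for every `1 ≤ i ≤ n` the set `I` contains
exactly one element of the pair `{i, 2n + 1 − i}`. -/
theorem non_critical_slope_is_shalika_type
    (n : ℕ) (hn : 1 ≤ n) (h : ℕ → ℤ) (v : ℕ → ℝ)
    (hdec : ∀ i, 1 ≤ i → i < 2 * n → h (i + 1) < h i)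
    (vdec : ∀ i, 1 ≤ i → i < 2 * n → v (i + 1) ≤ v i)
    (pairing : ∀ i, 1 ≤ i → i ≤ n →
      v i + v (2 * n + 1 - i) = (h i : ℝ) + (h (2 * n + 1 - i) : ℝ))
    (newton_above_hodge : ∀ j, 1 ≤ j → j ≤ 2 * n →
      ∑ i ∈ Icc 1 j, (h (2 * n + 1 - i) : ℝ) ≤ ∑ i ∈ Icc 1 j, v (2 * n + 1 - i))
    (endpoints : ∑ i ∈ Icc 1 (2 * n), v (2 * n + 1 - i)
      = ∑ i ∈ Icc 1 (2 * n), (h (2 * n + 1 - i) : ℝ))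
    (I : Finset ℕ) (hI : I ⊆ Icc 1 (2 * n)) (hcard : I.card = n)
    (hncs : ∑ i ∈ I, v i - ∑ i ∈ Icc (n + 1) (2 * n), (h i : ℝ)
      < (h n : ℝ) - (h (n + 1) : ℝ)) :
    ∀ i, 1 ≤ i → i ≤ n →
      ((i ∈ I ∧ 2 * n + 1 - i ∉ I) ∨ (i ∉ I ∧ 2 * n + 1 - i ∈ I)) :=
  non_critical_slope_is_shalika_type_general n h v hdec vdec pairing newton_above_hodge I hI hcard
    hncs
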